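/- Let ρ be a density matrix on ℂ^d and let Φ be a quantum channel on ℂ^d with Kraus operators {K_i}. Then 2·V_ρ(Φ) − I_ρ(Φ) = (1/2) Σ_i tr( {√ρ, K̃_i}† {√ρ, K̃_i} ), where K̃_i = K_i − tr(K_i ρ)·I is the centered Kraus operator and {A,B} = AB + BA. -/

import Mathlib

open Matrix
open scoped ComplexOrder

noncomputable section

def Matrix.PosSemidef.sqrt {n 𝕜 : Type*} [Fintype n] [RCLike 𝕜] [DecidableEq n]
    {A : Matrix n n 𝕜} (hA : A.PosSemidef) : Matrix n n 𝕜 :=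
  hA.1.eigenvectorUnitary.1 * diagonal ((↑) ∘ (√·) ∘ hA.1.eigenvalues) *
  (star hA.1.eigenvectorUnitary : Matrix n n 𝕜)

/-- Variance of an operator `K` with respect to a state `ρ`:
`V_ρ(K) = ½ tr((K†K + KK†)ρ) − |tr(Kρ)|²`. -/
def opVar {d : ℕ} (ρ K : Matrix (Fin d) (Fin d) ℂ) : ℝ :=
  (((Kᴴ * K + K * Kᴴ) * ρ).trace).re / 2 - ‖(K * ρ).trace‖ ^ 2

/-- Variance of a channel with Kraus operators `K i`: `V_ρ(Φ) = Σ_i V_ρ(K_i)`. -/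
def chanVar {d n : ℕ} (ρ : Matrix (Fin d) (Fin d) ℂ)
    (K : Fin n → Matrix (Fin d) (Fin d) ℂ) : ℝ :=
  ∑ i, opVar ρ (K i)

/-- Wigner–Yanase skew information of a channel with Kraus operators `K i`:
`I_ρ(Φ) = ½ Σ_i ‖[√ρ, K_i]‖_F²`, where `√ρ` is the PSD square root of `ρ`. -/
def chanSkew {d n : ℕ} (ρ : Matrix (Fin d) (Fin d) ℂ) (hρ : ρ.PosSemidef)
    (K : Fin n → Matrix (Fin d) (Fin d) ℂ) : ℝ :=
  (1 / 2) * ∑ i,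
    (((hρ.sqrt * K i - K i * hρ.sqrt)ᴴ * (hρ.sqrt * K i - K i * hρ.sqrt)).trace).re

/-- Quantum uncertainty of a channel:
`Q_ρ(Φ) = √(V_ρ(Φ)² − (V_ρ(Φ) − I_ρ(Φ))²)`. -/
def chanQ {d n : ℕ} (ρ : Matrix (Fin d) (Fin d) ℂ) (hρ : ρ.PosSemidef)
    (K : Fin n → Matrix (Fin d) (Fin d) ℂ) : ℝ :=
  Real.sqrt ((chanVar ρ K) ^ 2 - (chanVar ρ K - chanSkew ρ hρ K) ^ 2)

/-!
Write `s = √ρ` and `K̃ = K − tr(Kρ)·I`. Since `tr ρ = 1`, centering lowers `½ tr((K†K + KK†)ρ)` by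
exactly `|tr(Kρ)|²`, so `2 V_ρ(K) = tr((K̃†K̃ + K̃K̃†)ρ)`; and centering does not change the
commutator, `[s, K̃] = [s, K]`. For Hermitian `s` the anticommutator and commutator satisfy the
parallelogram law `‖{s, M}‖² + ‖[s, M]‖² = 2 tr((M†M + MM†) s²)`. With `M = K̃` and `s² = ρ` this
gives `4 V_ρ(K) − ‖[s, K]‖² = ‖{s, K̃}‖²` for each Kraus operator; summing and halving gives the
identity.
-/

namespace Matrix

section SquareRoot

variable {n 𝕜 : Type*} [Fintype n] [RCLike 𝕜] [DecidableEq n] {A : Matrix n n 𝕜}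

theorem PosSemidef.isHermitian_sqrt (hA : A.PosSemidef) : hA.sqrt.IsHermitian := by
  have hD : star (((↑) ∘ (√·) ∘ hA.1.eigenvalues : n → 𝕜)) = (↑) ∘ (√·) ∘ hA.1.eigenvalues := by
    funext i
    simp
  rw [IsHermitian, PosSemidef.sqrt, conjTranspose_mul, conjTranspose_mul, diagonal_conjTranspose,
    hD]
  simp only [star_eq_conjTranspose, conjTranspose_conjTranspose, Matrix.mul_assoc]

theorem PosSemidef.sqrt_mul_self (hA : A.PosSemidef) : hA.sqrt * hA.sqrt = A := by
  have hU : (star hA.1.eigenvectorUnitary : Matrix n n 𝕜) * hA.1.eigenvectorUnitary = 1 :=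
    Unitary.star_mul_self_of_mem hA.1.eigenvectorUnitary.2
  conv_rhs => rw [hA.1.spectral_theorem, Unitary.conjStarAlgAut_apply]
  rw [PosSemidef.sqrt,
    show ∀ U D S : Matrix n n 𝕜, U * D * S * (U * D * S) = U * (D * (S * U) * D) * S by
      intros; simp only [Matrix.mul_assoc],
    hU, Matrix.mul_one, diagonal_mul_diagonal]
  congr 3
  funext i
  simp only [Function.comp_apply, ← RCLike.ofReal_mul,
    Real.mul_self_sqrt (hA.eigenvalues_nonneg i)]

end SquareRoot

section Commutators

variable {n R : Type*} [Fintype n] [CommRing R]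

theorem commutator_sub_smul_one [DecidableEq n] (s K : Matrix n n R) (c : R) :
    s * (K - c • 1) - (K - c • 1) * s = s * K - K * s := by
  simp only [Matrix.mul_sub, Matrix.sub_mul, Matrix.mul_smul, Matrix.smul_mul, Matrix.mul_one,
    Matrix.one_mul]
  abel

theorem trace_anticommutator_add_trace_commutator [StarRing R] {s : Matrix n n R}
    (hs : s.IsHermitian) (M : Matrix n n R) :
    ((s * M + M * s)ᴴ * (s * M + M * s)).trace + ((s * M - M * s)ᴴ * (s * M - M * s)).trace
      = 2 * ((Mᴴ * M + M * Mᴴ) * (s * s)).trace := by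
  -- the mixed terms cancel; the squared ones are cycled into `tr(M†M s²)` and `tr(MM† s²)`
  have h₁ : (Mᴴ * s * (s * M)).trace = (M * Mᴴ * (s * s)).trace := by
    rw [show Mᴴ * s * (s * M) = Mᴴ * (s * s) * M by noncomm_ring, trace_mul_cycle,
      Matrix.mul_assoc]
  have h₂ : (s * Mᴴ * (M * s)).trace = (Mᴴ * M * (s * s)).trace := by
    rw [show s * Mᴴ * (M * s) = s * (Mᴴ * M * s) by noncomm_ring, trace_mul_comm,
      Matrix.mul_assoc]
  have h₃ : (s * Mᴴ * (s * M)).trace = (Mᴴ * s * (M * s)).trace := by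
    rw [show s * Mᴴ * (s * M) = s * (Mᴴ * (s * M)) by noncomm_ring, trace_mul_comm,
      show Mᴴ * (s * M) * s = Mᴴ * s * (M * s) by noncomm_ring]
  simp only [conjTranspose_add, conjTranspose_sub, conjTranspose_mul, hs.eq, Matrix.add_mul,
    Matrix.mul_add, Matrix.sub_mul, Matrix.mul_sub, trace_add, trace_sub]
  rw [h₁, h₂, h₃]
  ring

end Commutators

end Matrix

open Matrix

section Centering

variable {n R : Type*} [Fintype n] [DecidableEq n] [CommRing R] [StarRing R]

def centered (ρ K : Matrix n n R) : Matrix n n R :=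
  K - (K * ρ).trace • 1

theorem trace_centered_moment {ρ : Matrix n n R} (hρ : ρ.IsHermitian) (htr : ρ.trace = 1)
    (K : Matrix n n R) :
    (((centered ρ K)ᴴ * centered ρ K + centered ρ K * (centered ρ K)ᴴ) * ρ).trace
      = ((Kᴴ * K + K * Kᴴ) * ρ).trace - 2 * ((K * ρ).trace * star (K * ρ).trace) := by
  have hKH : (Kᴴ * ρ).trace = star (K * ρ).trace := by
    rw [← trace_conjTranspose, conjTranspose_mul, hρ.eq, trace_mul_comm]
  simp only [centered, conjTranspose_sub, conjTranspose_smul, conjTranspose_one, Matrix.sub_mul,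
    Matrix.mul_sub, Matrix.add_mul, Matrix.smul_mul, Matrix.mul_smul, Matrix.one_mul,
    Matrix.mul_one, trace_add, trace_sub, trace_smul, htr, hKH, smul_eq_mul]
  ring

end Centering

variable {d : ℕ} {ρ : Matrix (Fin d) (Fin d) ℂ}

theorem two_mul_opVar (hρ : ρ.IsHermitian) (htr : ρ.trace = 1) (K : Matrix (Fin d) (Fin d) ℂ) :
    2 * opVar ρ K
      = ((((centered ρ K)ᴴ * centered ρ K + centered ρ K * (centered ρ K)ᴴ) * ρ).trace).re := by
  rw [trace_centered_moment hρ htr, Complex.star_def, Complex.mul_conj', opVar]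
  norm_cast
  simp only [Complex.sub_re, Complex.ofReal_re]
  ring

theorem four_mul_opVar_sub_commutator (hρ : ρ.PosSemidef) (htr : ρ.trace = 1)
    (K : Matrix (Fin d) (Fin d) ℂ) :
    4 * opVar ρ K - (((hρ.sqrt * K - K * hρ.sqrt)ᴴ * (hρ.sqrt * K - K * hρ.sqrt)).trace).re
      = (((hρ.sqrt * centered ρ K + centered ρ K * hρ.sqrt)ᴴ *
          (hρ.sqrt * centered ρ K + centered ρ K * hρ.sqrt)).trace).re := by
  have parallelogram := congrArg Complex.re <|
    trace_anticommutator_add_trace_commutator hρ.isHermitian_sqrt (centered ρ K)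
  rw [centered, commutator_sub_smul_one, hρ.sqrt_mul_self, ← centered] at parallelogram
  simp only [Complex.add_re, Complex.mul_re, Complex.re_ofNat, Complex.im_ofNat, zero_mul,
    sub_zero] at parallelogram
  linarith [two_mul_opVar hρ.isHermitian htr K]

theorem stmt_10_general {d n : ℕ}
    (ρ : Matrix (Fin d) (Fin d) ℂ) (hρ : ρ.PosSemidef) (htr : ρ.trace = 1)
    (K : Fin n → Matrix (Fin d) (Fin d) ℂ) :
    2 * chanVar ρ K - chanSkew ρ hρ K =
      (1 / 2) * ∑ i,
        (((hρ.sqrt * (K i - ((K i * ρ).trace) • 1) + (K i - ((K i * ρ).trace) • 1) * hρ.sqrt)ᴴ *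
          (hρ.sqrt * (K i - ((K i * ρ).trace) • 1) +
            (K i - ((K i * ρ).trace) • 1) * hρ.sqrt)).trace).re := by
  simp only [chanVar, chanSkew, Finset.mul_sum, ← Finset.sum_sub_distrib]
  refine Finset.sum_congr rfl fun i _ => ?_
  have := four_mul_opVar_sub_commutator hρ htr (K i)
  rw [centered] at this
  linarith

/-- `2 V_ρ(Φ) − I_ρ(Φ) = ½ Σ_i tr({√ρ, K̃_i}† {√ρ, K̃_i})` with
`K̃_i = K_i − tr(K_i ρ)·I` the centered Kraus operators. -/
theorem stmt_10 {d n : ℕ}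
    (ρ : Matrix (Fin d) (Fin d) ℂ) (hρ : ρ.PosSemidef) (htr : ρ.trace = 1)
    (K : Fin n → Matrix (Fin d) (Fin d) ℂ) (hK : ∑ i, (K i)ᴴ * K i = 1) :
    2 * chanVar ρ K - chanSkew ρ hρ K =
      (1 / 2) * ∑ i,
        (((hρ.sqrt * (K i - ((K i * ρ).trace) • 1) + (K i - ((K i * ρ).trace) • 1) * hρ.sqrt)ᴴ *
          (hρ.sqrt * (K i - ((K i * ρ).trace) • 1) +
            (K i - ((K i * ρ).trace) • 1) * hρ.sqrt)).trace).re :=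
  stmt_10_general ρ hρ htr K
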